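/- arXiv:2409.11987 — 17 statements merged into one kernel-verified Lean document; each statement's English description precedes it below -/
import Mathlib

section
/- Let R be an associative ring with unity and a,b,c ∈ R. If p and p' are both left (b,c)-spectral idempotents of a (i.e., p² = p ∈ bRca, pb = b, cap = ca, and likewise for p'), then p = p'. -/
section Semigroup

variable {S : Type*} [Semigroup S]

theorem mul_eq_left_of_eq_mul_of_mul_eq {p q t v : S} (hp : p = t * v) (hv : v * q = v) :
    p * q = p := by
  rw [hp, mul_assoc, hv]

theorem mul_eq_right_of_eq_mul_of_mul_eq {p q u t : S} (hq : q = u * t) (hu : p * u = u) :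
    p * q = q := by
  rw [hq, ← mul_assoc, hu]

end Semigroup

theorem left_bc_spectral_idempotent_unique_general {R : Type*} [Ring R] (a b c p p' : R)
    (hp_mem : ∃ t : R, p = b * t * (c * a))
    (hp_b : p * b = b)
    (hp'_mem : ∃ t : R, p' = b * t * (c * a))
    (hp'_ca : c * a * p' = c * a) :
    p = p' := by
  obtain ⟨t, ht⟩ := hp_mem
  obtain ⟨t', ht'⟩ := hp'_mem
  have hpp'_left : p * p' = p := mul_eq_left_of_eq_mul_of_mul_eq ht hp'_ca
  have hpp'_right : p * p' = p' :=
    mul_eq_right_of_eq_mul_of_mul_eq (ht'.trans (mul_assoc b t' (c * a))) hp_b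
  rw [← hpp'_left, hpp'_right]

/-- Uniqueness of the left (b,c)-spectral idempotent. -/
theorem left_bc_spectral_idempotent_unique {R : Type*} [Ring R] (a b c p p' : R)
    (hp_idem : p * p = p) (hp_mem : ∃ t : R, p = b * t * (c * a))
    (hp_b : p * b = b) (hp_ca : c * a * p = c * a)
    (hp'_idem : p' * p' = p') (hp'_mem : ∃ t : R, p' = b * t * (c * a))
    (hp'_b : p' * b = b) (hp'_ca : c * a * p' = c * a) :
    p = p' :=
  left_bc_spectral_idempotent_unique_general a b c p p' hp_mem hp_b hp'_mem hp'_ca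
end

section
/- Let R be an associative ring with unity and a,b,c ∈ R. If q and q' are both right (b,c)-spectral idempotents of a (i.e., q² = q ∈ abRc, cq = c, qab = ab, and likewise for q'), then q = q'. -/
section Semigroup

variable {M : Type*} [Semigroup M]

theorem mul_eq_left_of_eq_mul_of_mul_eq_s1 {x c q q' : M} (hq : q = x * c) (hc : c * q' = c) :
    q * q' = q := by
  rw [hq, mul_assoc, hc]

theorem mul_eq_right_of_eq_mul_of_mul_eq_s1 {p y q q' : M} (hq' : q' = p * y) (hp : q * p = p) :
    q * q' = q' := by
  rw [hq', ← mul_assoc, hp]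

end Semigroup

theorem right_bc_spectral_idempotent_unique_general {R : Type*} [Ring R] (a b c q q' : R)
    (hq_mem : ∃ t : R, q = a * b * t * c)
    (hq_ab : q * (a * b) = a * b)
    (hq'_mem : ∃ t : R, q' = a * b * t * c)
    (hq'_c : c * q' = c) :
    q = q' := by
  obtain ⟨t, ht⟩ := hq_mem
  obtain ⟨t', ht'⟩ := hq'_mem
  calc q = q * q' := (mul_eq_left_of_eq_mul_of_mul_eq_s1 ht hq'_c).symm
    _ = q' := mul_eq_right_of_eq_mul_of_mul_eq_s1 (by rw [ht', mul_assoc (a * b)]) hq_ab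

/-- Uniqueness of the right (b,c)-spectral idempotent. -/
theorem right_bc_spectral_idempotent_unique {R : Type*} [Ring R] (a b c q q' : R)
    (hq_idem : q * q = q) (hq_mem : ∃ t : R, q = a * b * t * c)
    (hq_c : c * q = c) (hq_ab : q * (a * b) = a * b)
    (hq'_idem : q' * q' = q') (hq'_mem : ∃ t : R, q' = a * b * t * c)
    (hq'_c : c * q' = c) (hq'_ab : q' * (a * b) = a * b) :
    q = q' :=
  right_bc_spectral_idempotent_unique_general a b c q q' hq_mem hq_ab hq'_mem hq'_c
end

section
/- Let R be an associative ring with unity and a,b,c ∈ R. If a is (b,c)-polar, then b is regular, i.e., b ∈ bRb. -/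
/-- If a is (b,c)-polar then b is regular. -/
theorem bc_polar_b_regular {R : Type*} [Ring R] (a b c : R)
    (h : ∃ p q : R,
      (p * p = p ∧ ∃ t : R, p = b * t * (c * a)) ∧
      (q * q = q ∧ ∃ t : R, q = a * b * t * c) ∧
      p * b = b ∧ c * q = c ∧ c * a * p = c * a ∧ q * (a * b) = a * b) :
    ∃ y : R, b = b * y * b := by
  obtain ⟨p, -, ⟨-, t, hp⟩, -, hpb, -⟩ := h
  refine ⟨t * (c * a), ?_⟩
  calc b = p * b := hpb.symm
    _ = b * (t * (c * a)) * b := by rw [hp, mul_assoc b]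
end

section
/- Let R be an associative ring with unity and a,b,c ∈ R. If a is (b,c)-polar, then cab is regular, i.e., cab ∈ (cab)R(cab). -/
theorem cab_mul_mul_cab_eq {M : Type*} [Semigroup M] {a b c t : M}
    (h : c * a * (b * t * (c * a)) = c * a) :
    c * a * b * t * (c * a * b) = c * a * b := by
  calc c * a * b * t * (c * a * b) = c * a * (b * t * (c * a)) * b := by simp only [mul_assoc]
    _ = c * a * b := by rw [h]

/-- If a is (b,c)-polar then cab is regular. -/
theorem bc_polar_cab_regular {R : Type*} [Ring R] (a b c : R)
    (h : ∃ p q : R,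
      (p * p = p ∧ ∃ t : R, p = b * t * (c * a)) ∧
      (q * q = q ∧ ∃ t : R, q = a * b * t * c) ∧
      p * b = b ∧ c * q = c ∧ c * a * p = c * a ∧ q * (a * b) = a * b) :
    ∃ y : R, c * a * b = (c * a * b) * y * (c * a * b) := by
  obtain ⟨p, -, ⟨-, t, rfl⟩, -, -, -, hcap, -⟩ := h
  exact ⟨t, (cab_mul_mul_cab_eq hcap).symm⟩
end

section
/- Let R be an associative ring with unity and a,b,c ∈ R. If a is (b,c)-invertible with (b,c)-inverse y, then a is (b,c)-polar with left (b,c)-spectral idempotent p = ya and right (b,c)-spectral idempotent q = ay. -/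
/-!
Since `y ∈ R c` and `c a y = c`, the element `y` is an outer inverse of `a`: `y a y = y`.
Hence `y a` and `a y` are idempotent, and writing `y = b u = v c` gives
`y a = (y a y) a = b (u a v) (c a)` and `a y = a (y a y) = a b (u a v) c`.
-/

namespace BCInverse

variable {S : Type*} [Semigroup S] {a b c y : S}

theorem mul_mul_self_eq (hy_Rc : ∃ v, y = v * c) (hcay : c * a * y = c) : y * a * y = y := by
  obtain ⟨v, rfl⟩ := hy_Rc
  simp only [mul_assoc] at hcay ⊢
  rw [hcay]

theorem isIdempotentElem_mul_left (hyay : y * a * y = y) : IsIdempotentElem (y * a) := by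
  rw [IsIdempotentElem, ← mul_assoc, hyay]

theorem isIdempotentElem_mul_right (hyay : y * a * y = y) : IsIdempotentElem (a * y) := by
  rw [IsIdempotentElem, mul_assoc, ← mul_assoc y, hyay]

theorem mul_left_eq {u v : S} (hu : y = b * u) (hv : y = v * c) (hyay : y * a * y = y) :
    y * a = b * (u * a * v) * (c * a) :=
  calc y * a = (y * a * y) * a := by rw [hyay]
    _ = b * u * a * (v * c) * a := by rw [← hu, ← hv]
    _ = b * (u * a * v) * (c * a) := by simp only [mul_assoc]

theorem mul_right_eq {u v : S} (hu : y = b * u) (hv : y = v * c) (hyay : y * a * y = y) :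
    a * y = a * b * (u * a * v) * c :=
  calc a * y = a * (y * a * y) := by rw [hyay]
    _ = a * (b * u * a * (v * c)) := by rw [← hu, ← hv]
    _ = a * b * (u * a * v) * c := by simp only [mul_assoc]

end BCInverse

/-- If y is the (b,c)-inverse of a, then a is (b,c)-polar with
left spectral idempotent ya and right spectral idempotent ay. -/
theorem bc_invertible_implies_bc_polar {R : Type*} [Ring R] (a b c y : R)
    (hy_bR : ∃ u : R, y = b * u) (hy_Rc : ∃ v : R, y = v * c)
    (hyab : y * a * b = b) (hcay : c * a * y = c) :
    ((y * a) * (y * a) = y * a ∧ ∃ t : R, y * a = b * t * (c * a)) ∧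
    ((a * y) * (a * y) = a * y ∧ ∃ t : R, a * y = a * b * t * c) ∧
    (y * a) * b = b ∧ c * (a * y) = c ∧
    c * a * (y * a) = c * a ∧ (a * y) * (a * b) = a * b := by
  have hyay := BCInverse.mul_mul_self_eq hy_Rc hcay
  obtain ⟨u, hu⟩ := hy_bR
  obtain ⟨v, hv⟩ := hy_Rc
  refine ⟨⟨BCInverse.isIdempotentElem_mul_left hyay, _, BCInverse.mul_left_eq hu hv hyay⟩,
    ⟨BCInverse.isIdempotentElem_mul_right hyay, _, BCInverse.mul_right_eq hu hv hyay⟩,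
    hyab, ?_, ?_, ?_⟩
  · rw [← mul_assoc, hcay]
  · rw [← mul_assoc, hcay]
  · rw [mul_assoc, ← mul_assoc y, hyab]
end

section
/- Let R be an associative ring with unity and a,b,c ∈ R. If a is (b,c)-polar with left (b,c)-spectral idempotent p, and b⁻ is an inner inverse of b (b b⁻ b = b), then 1 + p − b b⁻ is left invertible in R, with left inverse b b⁻ + 1 − p. -/
/-! Put `e = b b⁻`. Since `p ∈ bR` and `b b⁻ b = b` we get `e p = p`, and `p b = b` gives `p e = e`.
These two relations alone force `e` and `p` to be idempotent, `e e = e (p e) = (e p) e = p e = e`,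
and then `(e + 1 - p)(1 + p - e)` expands to `1`. -/

theorem mul_self_eq_of_mul_eq_of_mul_eq {S : Type*} [Semigroup S] {e p : S}
    (hep : e * p = p) (hpe : p * e = e) : e * e = e :=
  calc e * e = e * (p * e) := by rw [hpe]
    _ = (e * p) * e := (mul_assoc _ _ _).symm
    _ = e := by rw [hep, hpe]

theorem add_one_sub_mul_one_add_sub_eq_one {R : Type*} [Ring R] {e p : R}
    (hep : e * p = p) (hpe : p * e = e) : (e + 1 - p) * (1 + p - e) = 1 := by
  have he : e * e = e := mul_self_eq_of_mul_eq_of_mul_eq hep hpe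
  have hp : p * p = p := mul_self_eq_of_mul_eq_of_mul_eq hpe hep
  calc (e + 1 - p) * (1 + p - e) = 1 + (e * p - p) + (p * e - e) - (e * e - e) - (p * p - p) := by
        noncomm_ring
    _ = 1 := by rw [hep, hpe, he, hp]; abel

theorem one_add_p_sub_bbinv_left_invertible_general {R : Type*} [Ring R] (a b c p bi : R)
    (hp_mem : ∃ t : R, p = b * t * (c * a))
    (hp_b : p * b = b)
    (hbi : b * bi * b = b) :
    (b * bi + 1 - p) * (1 + p - b * bi) = 1 := by
  obtain ⟨t, rfl⟩ := hp_mem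
  apply add_one_sub_mul_one_add_sub_eq_one
  · simp only [← mul_assoc, hbi]
  · rw [← mul_assoc, hp_b]

/-- If a is (b,c)-polar with left spectral idempotent p and b⁻ is an inner
inverse of b, then 1 + p - b b⁻ is left invertible with left inverse b b⁻ + 1 - p. -/
theorem one_add_p_sub_bbinv_left_invertible {R : Type*} [Ring R] (a b c p q bi : R)
    (hp_idem : p * p = p) (hp_mem : ∃ t : R, p = b * t * (c * a))
    (hp_b : p * b = b) (hp_ca : c * a * p = c * a)
    (hq_idem : q * q = q) (hq_mem : ∃ t : R, q = a * b * t * c)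
    (hq_c : c * q = c) (hq_ab : q * (a * b) = a * b)
    (hbi : b * bi * b = b) :
    (b * bi + 1 - p) * (1 + p - b * bi) = 1 :=
  one_add_p_sub_bbinv_left_invertible_general a b c p bi hp_mem hp_b hbi
end

section
/- Let R be an associative ring with unity and a,b,c ∈ R. If a is (b,c)-polar with right (b,c)-spectral idempotent q, and c⁻ is an inner inverse of c (c c⁻ c = c), then 1 + q − c⁻ c is right invertible in R, with right inverse c⁻ c + 1 − q. -/
/-! With `e := c⁻ c`, the relations `q e = q` (as `q ∈ R c`) and `e q = e` (as `c q = c`) make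
both `q` and `e` idempotent, and expanding the product then leaves `1`. -/

theorem one_add_sub_mul_add_one_sub_eq_one {R : Type*} [Ring R] {q e : R}
    (hqe : q * e = q) (heq : e * q = e) : (1 + q - e) * (e + 1 - q) = 1 := by
  have hqq : q * q = q := by
    calc q * q = q * e * q := by rw [hqe]
      _ = q := by rw [mul_assoc, heq, hqe]
  have hee : e * e = e := by
    calc e * e = e * q * e := by rw [heq]
      _ = e := by rw [mul_assoc, hqe, heq]
  calc (1 + q - e) * (e + 1 - q) = 1 + (q * e - q * q) + (e * q - e * e) := by noncomm_ring
    _ = 1 := by rw [hqq, hee, hqe, heq, sub_self, sub_self, add_zero, add_zero]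

theorem mul_mul_inner_inverse_mul {R : Type*} [Monoid R] {c ci : R} (hci : c * ci * c = c)
    (t : R) : t * c * (ci * c) = t * c := by
  rw [mul_assoc, ← mul_assoc c, hci]

theorem one_add_q_sub_cinvc_right_invertible_general {R : Type*} [Ring R] (a b c q ci : R)
    (hq_mem : ∃ t : R, q = a * b * t * c)
    (hq_c : c * q = c)
    (hci : c * ci * c = c) :
    (1 + q - ci * c) * (ci * c + 1 - q) = 1 := by
  obtain ⟨t, rfl⟩ := hq_mem
  refine one_add_sub_mul_add_one_sub_eq_one (mul_mul_inner_inverse_mul hci _) ?_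
  rw [mul_assoc, hq_c]

/-- If a is (b,c)-polar with right spectral idempotent q and c⁻ is an inner
inverse of c, then 1 + q - c⁻ c is right invertible with right inverse c⁻ c + 1 - q. -/
theorem one_add_q_sub_cinvc_right_invertible {R : Type*} [Ring R] (a b c p q ci : R)
    (hp_idem : p * p = p) (hp_mem : ∃ t : R, p = b * t * (c * a))
    (hp_b : p * b = b) (hp_ca : c * a * p = c * a)
    (hq_idem : q * q = q) (hq_mem : ∃ t : R, q = a * b * t * c)
    (hq_c : c * q = c) (hq_ab : q * (a * b) = a * b)
    (hci : c * ci * c = c) :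
    (1 + q - ci * c) * (ci * c + 1 - q) = 1 :=
  one_add_q_sub_cinvc_right_invertible_general a b c q ci hq_mem hq_c hci
end

section
/- Let R be an associative ring with unity and a,b ∈ R. Then a is (b,b)-polar if and only if a is polar along b. -/
/-!
A polar element `p` along `b` makes `b * a` a unit of the corner ring `p R p`: from
`p = (b * a) * t * (b * a)` one reads off the inverse `p * t * (b * a)`. Multiplying it by `b`
gives an inverse `y` of `a` along `b`, and `q := a * y` is the idempotent that the dual half of
`(b, b)`-polarity asks for. Conversely the idempotent `p` of a `(b, b)`-polar element already
commutes with `b * a`, and `b = b * q ∈ b * a * R` puts it in `(b * a) R (b * a)`.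
-/

section Semigroup

variable {M : Type*} [Semigroup M]

/-- Inverse of `a` along `d` in the sense of Mary. -/
structure IsInverseAlong (a d y : M) : Prop where
  inv_mul_mul : y * a * d = d
  mul_mul_inv : d * a * y = d
  exists_eq_mul_left : ∃ u, y = d * u
  exists_eq_mul_right : ∃ v, y = v * d

namespace IsInverseAlong

variable {a d y : M}

theorem mul_mul_self (h : IsInverseAlong a d y) : y * a * y = y := by
  obtain ⟨u, rfl⟩ := h.exists_eq_mul_left
  rw [← mul_assoc, h.inv_mul_mul]

theorem exists_eq_mul_mul (h : IsInverseAlong a d y) : ∃ w, y = d * w * d := by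
  obtain ⟨u, hu⟩ := h.exists_eq_mul_left
  obtain ⟨v, hv⟩ := h.exists_eq_mul_right
  refine ⟨u * a * v, ?_⟩
  calc y = y * a * y := h.mul_mul_self.symm
    _ = d * u * a * (v * d) := by rw [← hu, ← hv]
    _ = d * (u * a * v) * d := by simp only [mul_assoc]

theorem dually_polar (h : IsInverseAlong a d y) :
    (a * y * (a * y) = a * y ∧ ∃ w, a * y = a * d * w * d) ∧
      d * (a * y) = d ∧ a * y * (a * d) = a * d := by
  obtain ⟨w, hw⟩ := h.exists_eq_mul_mul
  refine ⟨⟨?_, w, by rw [hw]; simp only [mul_assoc]⟩, ?_, ?_⟩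
  · rw [mul_assoc, ← mul_assoc y, h.mul_mul_self]
  · rw [← mul_assoc, h.mul_mul_inv]
  · rw [mul_assoc, ← mul_assoc y, h.inv_mul_mul]

end IsInverseAlong

theorem isInverseAlong_of_polarAlong {a b p t : M} (hpb : p * b = b)
    (hcomm : p * (b * a) = b * a * p) (ht : p = b * a * t * (b * a)) :
    IsInverseAlong a b (p * t * (b * a) * b) := by
  have hpx : p * (b * a) = b * a := by rw [← mul_assoc, hpb]
  have hxp : b * a * p = b * a := hcomm ▸ hpx
  have hgx : p * t * (b * a) * (b * a) = p := by
    calc p * t * (b * a) * (b * a) = b * a * t * (b * a * t * (b * a)) * (b * a) := by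
          rw [ht]; simp only [mul_assoc]
      _ = p := by rw [← ht, mul_assoc _ p, hpx, ← ht]
  have hxg : b * a * (p * t * (b * a)) = p := by
    calc b * a * (p * t * (b * a)) = b * a * p * t * (b * a) := by simp only [mul_assoc]
      _ = p := by rw [hxp, ← ht]
  refine ⟨?_, ?_, ⟨a * t * (b * a) * t * (b * a) * b, ?_⟩, ⟨p * t * (b * a), rfl⟩⟩
  · calc p * t * (b * a) * b * a * b = p * t * (b * a) * (b * a) * b := by simp only [mul_assoc]
      _ = b := by rw [hgx, hpb]
  · rw [← mul_assoc, hxg, hpb]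
  · rw [ht]; simp only [mul_assoc]

end Semigroup

/-- a is (b,b)-polar iff a is polar along b. -/
theorem bb_polar_iff_polar_along {R : Type*} [Ring R] (a b : R) :
    (∃ p q : R,
      (p * p = p ∧ ∃ t : R, p = b * t * (b * a)) ∧
      (q * q = q ∧ ∃ t : R, q = a * b * t * b) ∧
      p * b = b ∧ b * q = b ∧ b * a * p = b * a ∧ q * (a * b) = a * b) ↔
    (∃ p : R, p * p = p ∧ p * (b * a) = (b * a) * p ∧ p * b = b ∧
      ∃ t : R, p = (b * a) * t * (b * a)) := by
  constructor
  · rintro ⟨p, q, ⟨hpp, t, hp⟩, ⟨-, s, rfl⟩, hpb, hbq, hbap, -⟩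
    refine ⟨p, hpp, by rw [← mul_assoc, hpb, hbap], hpb, b * s * b * t, ?_⟩
    calc p = b * (a * b * s * b) * t * (b * a) := by rw [hbq, hp]
      _ = b * a * (b * s * b * t) * (b * a) := by simp only [mul_assoc]
  · rintro ⟨p, hpp, hcomm, hpb, t, hp⟩
    obtain ⟨⟨hqq, hq⟩, hbq, hqab⟩ := (isInverseAlong_of_polarAlong hpb hcomm hp).dually_polar
    refine ⟨p, _, ⟨hpp, a * t, ?_⟩, ⟨hqq, hq⟩, hpb, hbq, by rw [← hcomm, ← mul_assoc, hpb], hqab⟩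
    rw [hp]; simp only [mul_assoc]
end

section
/- Let R be an associative ring with unity and a,b,c ∈ R. If r and r' are both dual right (b,c)-spectral idempotents of a (i.e., r² = r ∈ acRb, br = b, rac = ac, and likewise for r'), then r = r'. -/
section

variable {R : Type*} [Semigroup R] {x b r s : R}

theorem mul_eq_left_of_exists_eq_mul_mul (hr : ∃ t, r = x * t * b) (hs : b * s = b) :
    r * s = r := by
  obtain ⟨t, rfl⟩ := hr
  rw [mul_assoc, hs]

theorem mul_eq_right_of_exists_eq_mul_mul (hs : ∃ t, s = x * t * b) (hr : r * x = x) :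
    r * s = s := by
  obtain ⟨t, rfl⟩ := hs
  rw [← mul_assoc, ← mul_assoc, hr]

end

theorem dual_right_bc_spectral_idempotent_unique_general {R : Type*} [Ring R] (a b c r r' : R)
    (hr_mem : ∃ t : R, r = a * c * t * b)
    (hr_ac : r * (a * c) = a * c)
    (hr'_mem : ∃ t : R, r' = a * c * t * b)
    (hr'_b : b * r' = b) :
    r = r' :=
  calc r = r * r' := (mul_eq_left_of_exists_eq_mul_mul hr_mem hr'_b).symm
    _ = r' := mul_eq_right_of_exists_eq_mul_mul hr'_mem hr_ac

/-- Uniqueness of the dual right (b,c)-spectral idempotent. -/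
theorem dual_right_bc_spectral_idempotent_unique {R : Type*} [Ring R] (a b c r r' : R)
    (hr_idem : r * r = r) (hr_mem : ∃ t : R, r = a * c * t * b)
    (hr_b : b * r = b) (hr_ac : r * (a * c) = a * c)
    (hr'_idem : r' * r' = r') (hr'_mem : ∃ t : R, r' = a * c * t * b)
    (hr'_b : b * r' = b) (hr'_ac : r' * (a * c) = a * c) :
    r = r' :=
  dual_right_bc_spectral_idempotent_unique_general a b c r r' hr_mem hr_ac hr'_mem hr'_b
end

section
/- Let R be an associative ring with unity and a,b,c ∈ R. Then a is dually (b,c)-polar if and only if a is (c,b)-invertible. -/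
/-!
If `a` is dually `(b,c)`-polar with idempotents `r = a p` (`p ∈ cRb`) and `s = q (b a)` (`q ∈ cR`),
then `y = s p` is the `(c,b)`-inverse of `a`. Conversely, a `(c,b)`-inverse `y` of `a` is an inner
inverse, `y a y = y`, so `r = a y` and `s = y a` are idempotents witnessing dual polarity.
-/

section Semigroup

variable {S : Type*} [Semigroup S]

theorem mul_mul_eq_self_of_eq_mul {y a c u : S} (hy : y = c * u) (hyac : y * a * c = c) :
    y * a * y = y := by
  calc y * a * y = y * a * c * u := by rw [hy, ← mul_assoc, ← hy]
    _ = y := by rw [hyac, hy]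

theorem isIdempotentElem_mul_of_mul_mul_eq_self {y a : S} (h : y * a * y = y) :
    IsIdempotentElem (a * y) := by
  rw [IsIdempotentElem, mul_assoc, ← mul_assoc y, h]

theorem isIdempotentElem_mul_of_mul_mul_eq_self' {y a : S} (h : y * a * y = y) :
    IsIdempotentElem (y * a) := by
  rw [IsIdempotentElem, ← mul_assoc, h]

theorem eq_mul_mul_of_mul_mul_eq_self {y a c b u v : S} (h : y * a * y = y) (hu : y = c * u)
    (hv : y = v * b) : y = c * (u * a * v) * b := by
  calc y = c * u * a * (v * b) := by rw [← hu, ← hv, h]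
    _ = c * (u * a * v) * b := by simp only [mul_assoc]

theorem mul_mul_mul_eq_right_of_polar {a b c p q r s : S} (hr : r = a * p) (hs : s = q * (b * a))
    (hrac : r * (a * c) = a * c) (hsc : s * c = c) : s * p * a * c = c := by
  calc s * p * a * c = q * b * (r * (a * c)) := by rw [hs, hr]; simp only [mul_assoc]
    _ = s * c := by rw [hrac, hs]; simp only [mul_assoc]
    _ = c := hsc

theorem mul_mul_mul_eq_left_of_polar {a b p r s : S} (hr : r = a * p) (hbr : b * r = b)
    (hbas : b * a * s = b * a) : b * a * (s * p) = b := by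
  rw [← mul_assoc, hbas, mul_assoc, ← hr, hbr]

end Semigroup

/-- a is dually (b,c)-polar iff a is (c,b)-invertible. -/
theorem dually_bc_polar_iff_cb_invertible {R : Type*} [Ring R] (a b c : R) :
    (∃ r s : R,
      (r * r = r ∧ ∃ t : R, r = a * c * t * b) ∧
      (s * s = s ∧ ∃ t : R, s = c * t * (b * a)) ∧
      b * r = b ∧ s * c = c ∧ r * (a * c) = a * c ∧ b * a * s = b * a) ↔
    (∃ y : R, (∃ u : R, y = c * u) ∧ (∃ v : R, y = v * b) ∧
      y * a * c = c ∧ b * a * y = b) := by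
  constructor
  · rintro ⟨r, s, ⟨-, t, hr⟩, ⟨-, u, hs⟩, hbr, hsc, hrac, hbas⟩
    have hr' : r = a * (c * t * b) := by rw [hr]; simp only [mul_assoc]
    refine ⟨s * (c * t * b), ⟨u * (b * a) * (c * t * b), ?_⟩, ⟨s * c * t, ?_⟩,
      mul_mul_mul_eq_right_of_polar hr' hs hrac hsc, mul_mul_mul_eq_left_of_polar hr' hbr hbas⟩
    · rw [hs]; simp only [mul_assoc]
    · simp only [mul_assoc]
  · rintro ⟨y, ⟨u, hu⟩, ⟨v, hv⟩, hyac, hbay⟩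
    have hyay := mul_mul_eq_self_of_eq_mul hu hyac
    have hy := eq_mul_mul_of_mul_mul_eq_self hyay hu hv
    refine ⟨a * y, y * a, ⟨isIdempotentElem_mul_of_mul_mul_eq_self hyay, u * a * v, ?_⟩,
      ⟨isIdempotentElem_mul_of_mul_mul_eq_self' hyay, u * a * v, ?_⟩, ?_, hyac, ?_, ?_⟩
    · rw [hy]; simp only [mul_assoc]
    · rw [hy]; simp only [mul_assoc]
    · rw [← mul_assoc, hbay]
    · rw [mul_assoc, ← mul_assoc y, hyac]
    · rw [← mul_assoc, hbay]
end

section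
/- Let R be a *-ring with unity and a,b,c ∈ R. Then a is (b,c)-polar if and only if a* is dually (b*,c*)-polar. -/
/-!
Applying the involution to every defining identity of the idempotents `p, q` witnessing
(b,c)-polarity of `a` produces idempotents `p*, q*` witnessing dual (b*,c*)-polarity of `a*`,
and conversely; `x** = x` closes the loop.
-/

section Polar

variable {R : Type*} [Semigroup R] [StarMul R]

def IsPolar (a b c : R) : Prop :=
  ∃ p q : R,
    (IsIdempotentElem p ∧ ∃ t : R, p = b * t * (c * a)) ∧
    (IsIdempotentElem q ∧ ∃ t : R, q = a * b * t * c) ∧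
    p * b = b ∧ c * q = c ∧ c * a * p = c * a ∧ q * (a * b) = a * b

def IsDuallyPolar (a b c : R) : Prop :=
  ∃ r s : R,
    (IsIdempotentElem r ∧ ∃ t : R, r = a * c * t * b) ∧
    (IsIdempotentElem s ∧ ∃ t : R, s = c * t * (b * a)) ∧
    b * r = b ∧ s * c = c ∧ r * (a * c) = a * c ∧ b * a * s = b * a

theorem IsPolar.isDuallyPolar_star {a b c : R} (h : IsPolar a b c) :
    IsDuallyPolar (star a) (star b) (star c) := by
  obtain ⟨p, q, ⟨hp, t, rfl⟩, ⟨hq, u, rfl⟩, hpb, hcq, hcap, hqab⟩ := h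
  refine ⟨_, _, ⟨IsIdempotentElem.star_iff.mpr hp, star t, ?_⟩,
    ⟨IsIdempotentElem.star_iff.mpr hq, star u, ?_⟩, ?_, ?_, ?_, ?_⟩
  · simp only [star_mul, mul_assoc]
  · simp only [star_mul, mul_assoc]
  · rw [← star_mul, hpb]
  · rw [← star_mul, hcq]
  · simpa only [star_mul, mul_assoc] using congrArg star hcap
  · simpa only [star_mul, mul_assoc] using congrArg star hqab

theorem IsDuallyPolar.isPolar_star {a b c : R} (h : IsDuallyPolar a b c) :
    IsPolar (star a) (star b) (star c) := by
  obtain ⟨r, s, ⟨hr, t, rfl⟩, ⟨hs, u, rfl⟩, hbr, hsc, hrac, hbas⟩ := h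
  refine ⟨_, _, ⟨IsIdempotentElem.star_iff.mpr hr, star t, ?_⟩,
    ⟨IsIdempotentElem.star_iff.mpr hs, star u, ?_⟩, ?_, ?_, ?_, ?_⟩
  · simp only [star_mul, mul_assoc]
  · simp only [star_mul, mul_assoc]
  · rw [← star_mul, hbr]
  · rw [← star_mul, hsc]
  · simpa only [star_mul, mul_assoc] using congrArg star hrac
  · simpa only [star_mul, mul_assoc] using congrArg star hbas

theorem isPolar_iff_isDuallyPolar_star {a b c : R} :
    IsPolar a b c ↔ IsDuallyPolar (star a) (star b) (star c) :=
  ⟨IsPolar.isDuallyPolar_star, fun h => by simpa only [star_star] using h.isPolar_star⟩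

end Polar

/-- In a *-ring, a is (b,c)-polar iff a* is dually (b*,c*)-polar. -/
theorem bc_polar_iff_star_dually_polar {R : Type*} [Ring R] [StarRing R] (a b c : R) :
    (∃ p q : R,
      (p * p = p ∧ ∃ t : R, p = b * t * (c * a)) ∧
      (q * q = q ∧ ∃ t : R, q = a * b * t * c) ∧
      p * b = b ∧ c * q = c ∧ c * a * p = c * a ∧ q * (a * b) = a * b) ↔
    (∃ r s : R,
      (r * r = r ∧ ∃ t : R, r = star a * star c * t * star b) ∧
      (s * s = s ∧ ∃ t : R, s = star c * t * (star b * star a)) ∧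
      star b * r = star b ∧ s * star c = star c ∧
      r * (star a * star c) = star a * star c ∧
      star b * star a * s = star b * star a) :=
  isPolar_iff_isDuallyPolar_star
end

section
/- Let R be an associative ring with unity and a,b,c ∈ R with a (b,c)-polar, ab = ba, ac = ca, and ba = ca. Then the left (b,c)-spectral idempotent p of a commutes with ba (i.e., p(ba) = (ba)p), and ba + 1 − p is left invertible in R. -/
/-! Since `ba = ca`, the spectral idempotent is `p = b t (ba)` for some `t`, and `pb = b`, `cap = ca`
make `p` a two-sided unit for `ba`. Hence `b t p` is a left inverse of `ba` in the corner `pRp`,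
and adding `1 - p` on both sides gives a left inverse of `ba + 1 - p`. -/

theorem IsIdempotentElem.add_one_sub_mul_add_one_sub_eq_one {R : Type*} [Ring R] {p x y : R}
    (hp : IsIdempotentElem p) (hpx : p * x = x) (hyp : y * p = y) (hyx : y * x = p) :
    (y + 1 - p) * (x + 1 - p) = 1 := by
  have expand : (y + 1 - p) * (x + 1 - p)
      = y * x + (y - y * p) + (x - p * x) + (1 - p) - (p - p * p) := by noncomm_ring
  rw [expand, hyx, hyp, hpx, hp.eq]
  abel

theorem left_spectral_comm_and_left_invertible_general {R : Type*} [Ring R] (a b c p : R)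
    (hp_idem : p * p = p) (hp_mem : ∃ t : R, p = b * t * (c * a))
    (hp_b : p * b = b) (hp_ca : c * a * p = c * a)
    (hbc : b * a = c * a) :
    p * (b * a) = (b * a) * p ∧ ∃ u : R, u * (b * a + 1 - p) = 1 := by
  obtain ⟨t, hp_eq⟩ := hp_mem
  rw [← hbc] at hp_eq
  have hp_left : p * (b * a) = b * a := by rw [← mul_assoc, hp_b]
  have hp_right : (b * a) * p = b * a := by rw [hbc, hp_ca]
  refine ⟨hp_left.trans hp_right.symm, b * t * p + 1 - p, ?_⟩
  apply IsIdempotentElem.add_one_sub_mul_add_one_sub_eq_one hp_idem hp_left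
  · rw [mul_assoc, hp_idem]
  · rw [mul_assoc, hp_left, ← hp_eq]

/-- If a is (b,c)-polar, ab = ba, ac = ca, ba = ca, then the left (b,c)-spectral
idempotent p commutes with ba and ba + 1 - p is left invertible. -/
theorem left_spectral_comm_and_left_invertible {R : Type*} [Ring R] (a b c p q : R)
    (hp_idem : p * p = p) (hp_mem : ∃ t : R, p = b * t * (c * a))
    (hp_b : p * b = b) (hp_ca : c * a * p = c * a)
    (hq_idem : q * q = q) (hq_mem : ∃ t : R, q = a * b * t * c)
    (hq_c : c * q = c) (hq_ab : q * (a * b) = a * b)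
    (hab : a * b = b * a) (hac : a * c = c * a) (hbc : b * a = c * a) :
    p * (b * a) = (b * a) * p ∧ ∃ u : R, u * (b * a + 1 - p) = 1 :=
  left_spectral_comm_and_left_invertible_general a b c p hp_idem hp_mem hp_b hp_ca hbc
end

section
/- Let R be an associative ring with unity and a,b,c ∈ R with a (b,c)-polar, ab = ba, ac = ca, and ba = ca. Then the right (b,c)-spectral idempotent q of a commutes with ac, and ac + 1 − q is right invertible in R. -/
/-!
The hypotheses give `ab = ba = ca = ac`, so `q` is a two-sided unit for `x = ac`, and
`q ∈ abRc = xRc` writes `q = x s`. For an idempotent `e` with `x e = x` and `e = x s`,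
the element `x + 1 - e` has the right inverse `e s + 1 - e`.
-/

theorem IsIdempotentElem.exists_add_one_sub_mul_eq_one {R : Type*} [Ring R] {e x s : R}
    (he : IsIdempotentElem e) (hxe : x * e = x) (hes : e = x * s) :
    ∃ u : R, (x + 1 - e) * u = 1 := by
  have h_mul_e : (x + 1 - e) * e = x := by
    rw [sub_mul, add_mul, hxe, one_mul, he.eq, add_sub_cancel_right]
  have h_mul_one_sub : (x + 1 - e) * (1 - e) = 1 - e := by
    rw [mul_sub, mul_one, h_mul_e]
    abel
  refine ⟨e * s + (1 - e), ?_⟩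
  rw [mul_add, ← mul_assoc, h_mul_e, ← hes, h_mul_one_sub, add_sub_cancel]

theorem right_spectral_comm_and_right_invertible_general {R : Type*} [Ring R] (a b c q : R)
    (hq_idem : q * q = q) (hq_mem : ∃ t : R, q = a * b * t * c)
    (hq_c : c * q = c) (hq_ab : q * (a * b) = a * b)
    (hab : a * b = b * a) (hac : a * c = c * a) (hbc : b * a = c * a) :
    q * (a * c) = (a * c) * q ∧ ∃ u : R, (a * c + 1 - q) * u = 1 := by
  obtain ⟨t, hq⟩ := hq_mem
  have hab_ac : a * b = a * c := by rw [hab, hbc, ← hac]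
  have hxq : a * c * q = a * c := by rw [mul_assoc, hq_c]
  have hqx : q * (a * c) = a * c := by rw [← hab_ac, hq_ab]
  have hq_eq : q = a * c * (t * c) := by rw [hq, hab_ac, mul_assoc]
  exact ⟨hqx.trans hxq.symm, IsIdempotentElem.exists_add_one_sub_mul_eq_one hq_idem hxq hq_eq⟩

/-- If a is (b,c)-polar, ab = ba, ac = ca, ba = ca, then the right (b,c)-spectral
idempotent q commutes with ac and ac + 1 - q is right invertible. -/
theorem right_spectral_comm_and_right_invertible {R : Type*} [Ring R] (a b c p q : R)
    (hp_idem : p * p = p) (hp_mem : ∃ t : R, p = b * t * (c * a))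
    (hp_b : p * b = b) (hp_ca : c * a * p = c * a)
    (hq_idem : q * q = q) (hq_mem : ∃ t : R, q = a * b * t * c)
    (hq_c : c * q = c) (hq_ab : q * (a * b) = a * b)
    (hab : a * b = b * a) (hac : a * c = c * a) (hbc : b * a = c * a) :
    q * (a * c) = (a * c) * q ∧ ∃ u : R, (a * c + 1 - q) * u = 1 :=
  right_spectral_comm_and_right_invertible_general a b c q hq_idem hq_mem hq_c hq_ab hab hac hbc
end

section
/- Let R be an associative ring with unity, a,b,c,d ∈ R, and suppose a is (b,c)-polar with left (b,c)-spectral idempotent p and right (b,c)-spectral idempotent q. If d is (b,c)-polar with left (b,c)-spectral idempotent p' and right (b,c)-spectral idempotent q', and cdp = cd and qdb = db, then p = p' and q = q'. -/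
theorem eq_of_left_id_of_right_id {S : Type*} [Semigroup S] {b x y p p' t t' : S}
    (hp : p = b * t * x) (hp' : p' = b * t' * y) (hb : p' * b = b) (hy : y * p = y) :
    p = p' :=
  calc p = p' * b * t * x := by rw [hb, hp]
    _ = p' * p := by rw [hp]; simp only [mul_assoc]
    _ = b * t' * (y * p) := by rw [hp']; simp only [mul_assoc]
    _ = p' := by rw [hy, hp']

theorem eq_of_right_id_of_left_id {S : Type*} [Semigroup S] {c x y q q' s s' : S}
    (hq : q = x * s * c) (hq' : q' = y * s' * c) (hc : c * q' = c) (hy : q * y = y) :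
    q = q' :=
  MulOpposite.op_injective <|
    eq_of_left_id_of_right_id (b := .op c) (x := .op x) (y := .op y)
      (t := .op s) (t' := .op s')
      (by simp only [hq, MulOpposite.op_mul, mul_assoc])
      (by simp only [hq', MulOpposite.op_mul, mul_assoc])
      (by rw [← MulOpposite.op_mul, hc]) (by rw [← MulOpposite.op_mul, hy])

theorem spectral_idempotents_eq_general {R : Type*} [Ring R] (a b c d p q p' q' : R)
    (hp_mem : ∃ t : R, p = b * t * (c * a))
    (hq_mem : ∃ t : R, q = a * b * t * c)
    (hp'_mem : ∃ t : R, p' = b * t * (c * d))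
    (hp'_b : p' * b = b)
    (hq'_mem : ∃ t : R, q' = d * b * t * c)
    (hq'_c : c * q' = c)
    (hcdp : c * d * p = c * d) (hqdb : q * (d * b) = d * b) :
    p = p' ∧ q = q' := by
  obtain ⟨t, hp⟩ := hp_mem
  obtain ⟨t', hp'⟩ := hp'_mem
  obtain ⟨s, hq⟩ := hq_mem
  obtain ⟨s', hq'⟩ := hq'_mem
  exact ⟨eq_of_left_id_of_right_id hp hp' hp'_b hcdp,
    eq_of_right_id_of_left_id hq hq' hq'_c hqdb⟩

/-- If a and d are both (b,c)-polar with spectral idempotents (p,q), (p',q')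
and cdp = cd, qdb = db, then p = p' and q = q'. -/
theorem spectral_idempotents_eq {R : Type*} [Ring R] (a b c d p q p' q' : R)
    (hp_idem : p * p = p) (hp_mem : ∃ t : R, p = b * t * (c * a))
    (hp_b : p * b = b) (hp_ca : c * a * p = c * a)
    (hq_idem : q * q = q) (hq_mem : ∃ t : R, q = a * b * t * c)
    (hq_c : c * q = c) (hq_ab : q * (a * b) = a * b)
    (hp'_idem : p' * p' = p') (hp'_mem : ∃ t : R, p' = b * t * (c * d))
    (hp'_b : p' * b = b) (hp'_cd : c * d * p' = c * d)
    (hq'_idem : q' * q' = q') (hq'_mem : ∃ t : R, q' = d * b * t * c)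
    (hq'_c : c * q' = c) (hq'_db : q' * (d * b) = d * b)
    (hcdp : c * d * p = c * d) (hqdb : q * (d * b) = d * b) :
    p = p' ∧ q = q' :=
  spectral_idempotents_eq_general a b c d p q p' q' hp_mem hq_mem hp'_mem hp'_b hq'_mem hq'_c hcdp
    hqdb
end

section
/- Let X be a Banach space and A, B, C ∈ B(X) bounded linear operators. Suppose there exist bounded projections P, Q ∈ B(X) with P² = P ∈ B·B(X)·C·A, Q² = Q ∈ A·B·B(X)·C, PB = B, CQ = C, CAP = CA, QAB = AB. Then range(P) = range(B), ker(Q) = ker(C), range(Q) = range(AB), and ker(P) = ker(CA). -/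
open ContinuousLinearMap

namespace LinearMap

variable {R M N : Type*} [Semiring R] [AddCommMonoid M] [AddCommMonoid N] [Module R M] [Module R N]

theorem range_eq_of_eq_comp_of_comp_eq {f : M →ₗ[R] M} {g : N →ₗ[R] M} {h : M →ₗ[R] N}
    (hf : f = g ∘ₗ h) (hfg : f ∘ₗ g = g) : range f = range g :=
  le_antisymm (hf ▸ range_comp_le_range h g) (hfg ▸ range_comp_le_range g f)

theorem ker_eq_of_eq_comp_of_comp_eq {f : M →ₗ[R] M} {g : M →ₗ[R] N} {h : N →ₗ[R] M}
    (hf : f = h ∘ₗ g) (hgf : g ∘ₗ f = g) : ker f = ker g :=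
  le_antisymm (hgf ▸ ker_le_ker_comp f g) (hf ▸ ker_le_ker_comp g h)

end LinearMap

theorem bc_polar_operator_ranges_general {X : Type*} [NormedAddCommGroup X]
    [NormedSpace ℂ X] (A B C P Q : X →L[ℂ] X)
    (hP_mem : ∃ R : X →L[ℂ] X, P = B ∘L R ∘L (C ∘L A))
    (hQ_mem : ∃ R : X →L[ℂ] X, Q = (A ∘L B) ∘L R ∘L C)
    (hPB : P ∘L B = B) (hCQ : C ∘L Q = C)
    (hCAP : C ∘L A ∘L P = C ∘L A) (hQAB : Q ∘L (A ∘L B) = A ∘L B) :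
    LinearMap.range (P : X →ₗ[ℂ] X) = LinearMap.range (B : X →ₗ[ℂ] X) ∧
    LinearMap.ker (Q : X →ₗ[ℂ] X) = LinearMap.ker (C : X →ₗ[ℂ] X) ∧
    LinearMap.range (Q : X →ₗ[ℂ] X) = LinearMap.range ((A ∘L B : X →L[ℂ] X) : X →ₗ[ℂ] X) ∧
    LinearMap.ker (P : X →ₗ[ℂ] X) = LinearMap.ker ((C ∘L A : X →L[ℂ] X) : X →ₗ[ℂ] X) := by
  obtain ⟨R, hR⟩ := hP_mem
  obtain ⟨S, hS⟩ := hQ_mem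
  exact ⟨LinearMap.range_eq_of_eq_comp_of_comp_eq
      (congrArg toLinearMap hR) (congrArg toLinearMap hPB),
    LinearMap.ker_eq_of_eq_comp_of_comp_eq (h := ↑(A ∘L B ∘L S))
      (congrArg toLinearMap hS) (congrArg toLinearMap hCQ),
    LinearMap.range_eq_of_eq_comp_of_comp_eq
      (congrArg toLinearMap hS) (congrArg toLinearMap hQAB),
    LinearMap.ker_eq_of_eq_comp_of_comp_eq (h := ↑(B ∘L R))
      (congrArg toLinearMap hR) (congrArg toLinearMap hCAP)⟩

/-- If A is (B,C)-polar with projections P, Q, then range P = range B,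
ker Q = ker C, range Q = range (AB), ker P = ker (CA). -/
theorem bc_polar_operator_ranges {X : Type*} [NormedAddCommGroup X]
    [NormedSpace ℂ X] [CompleteSpace X] (A B C P Q : X →L[ℂ] X)
    (hP_idem : P ∘L P = P) (hP_mem : ∃ R : X →L[ℂ] X, P = B ∘L R ∘L (C ∘L A))
    (hQ_idem : Q ∘L Q = Q) (hQ_mem : ∃ R : X →L[ℂ] X, Q = (A ∘L B) ∘L R ∘L C)
    (hPB : P ∘L B = B) (hCQ : C ∘L Q = C)
    (hCAP : C ∘L A ∘L P = C ∘L A) (hQAB : Q ∘L (A ∘L B) = A ∘L B) :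
    LinearMap.range (P : X →ₗ[ℂ] X) = LinearMap.range (B : X →ₗ[ℂ] X) ∧
    LinearMap.ker (Q : X →ₗ[ℂ] X) = LinearMap.ker (C : X →ₗ[ℂ] X) ∧
    LinearMap.range (Q : X →ₗ[ℂ] X) = LinearMap.range ((A ∘L B : X →L[ℂ] X) : X →ₗ[ℂ] X) ∧
    LinearMap.ker (P : X →ₗ[ℂ] X) = LinearMap.ker ((C ∘L A : X →L[ℂ] X) : X →ₗ[ℂ] X) :=
  bc_polar_operator_ranges_general A B C P Q hP_mem hQ_mem hPB hCQ hCAP hQAB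
end

section
/- Let X be a Banach space and A, B, C ∈ B(X). Suppose there exist bounded projections P, Q with range(P) = range(B), ker(Q) = ker(C), range(Q) = range(AB), ker(P) = ker(CA). Then range(C) = range(CAB) and ker(B) = ker(CAB). -/
/-!
The range of `AB` and the kernel of `C` are the range and kernel of the projection `Q`, hence
complementary, so `C` already attains all its values on `range (AB)`. Dually, `range B` and
`ker (CA)` are the range and kernel of `P`, hence meet only in `0`, so `CA` kills no nonzero
vector of `range B`.
-/

namespace LinearMap

variable {R M N P : Type*} [Semiring R] [AddCommMonoid M] [AddCommMonoid N] [AddCommMonoid P]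
  [Module R M] [Module R N] [Module R P]

theorem range_comp_eq_of_sup_ker_eq_top {f : M →ₗ[R] N} {g : N →ₗ[R] P}
    (h : range f ⊔ ker g = ⊤) : range (g ∘ₗ f) = range g := by
  rw [range_comp, ← Submodule.map_top g, ← h, Submodule.map_sup, le_ker_iff_map.mp le_rfl,
    sup_bot_eq]

theorem ker_comp_eq_of_disjoint_range_ker {f : M →ₗ[R] N} {g : N →ₗ[R] P}
    (h : Disjoint (range f) (ker g)) : ker (g ∘ₗ f) = ker f :=
  le_antisymm (fun x hx => Submodule.disjoint_def.mp h (f x) (mem_range_self f x) hx)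
    (ker_le_ker_comp f g)

end LinearMap

open ContinuousLinearMap

theorem range_ker_of_projections_general {X : Type*} [NormedAddCommGroup X]
    [NormedSpace ℂ X] (A B C P Q : X →L[ℂ] X)
    (hP_idem : P ∘L P = P) (hQ_idem : Q ∘L Q = Q)
    (hP_range : LinearMap.range (P : X →ₗ[ℂ] X) = LinearMap.range (B : X →ₗ[ℂ] X))
    (hQ_ker : LinearMap.ker (Q : X →ₗ[ℂ] X) = LinearMap.ker (C : X →ₗ[ℂ] X))
    (hQ_range : LinearMap.range (Q : X →ₗ[ℂ] X) = LinearMap.range (A ∘L B : X →ₗ[ℂ] X))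
    (hP_ker : LinearMap.ker (P : X →ₗ[ℂ] X) = LinearMap.ker (C ∘L A : X →ₗ[ℂ] X)) :
    LinearMap.range (C : X →ₗ[ℂ] X) = LinearMap.range (C ∘L A ∘L B : X →ₗ[ℂ] X) ∧
    LinearMap.ker (B : X →ₗ[ℂ] X) = LinearMap.ker (C ∘L A ∘L B : X →ₗ[ℂ] X) := by
  have hP : IsCompl (LinearMap.range (P : X →ₗ[ℂ] X)) (LinearMap.ker (P : X →ₗ[ℂ] X)) :=
    LinearMap.IsIdempotentElem.isCompl (IsIdempotentElem.toLinearMap hP_idem)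
  have hQ : IsCompl (LinearMap.range (Q : X →ₗ[ℂ] X)) (LinearMap.ker (Q : X →ₗ[ℂ] X)) :=
    LinearMap.IsIdempotentElem.isCompl (IsIdempotentElem.toLinearMap hQ_idem)
  constructor
  · refine (LinearMap.range_comp_eq_of_sup_ker_eq_top ?_).symm
    rw [← hQ_range, ← hQ_ker]
    exact hQ.sup_eq_top
  · refine (LinearMap.ker_comp_eq_of_disjoint_range_ker (g := (C ∘L A : X →ₗ[ℂ] X)) ?_).symm
    rw [← hP_range, ← hP_ker]
    exact hP.disjoint

/-- If projections P, Q satisfy range P = range B, ker Q = ker C,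
range Q = range (AB), ker P = ker (CA), then range C = range (CAB) and
ker B = ker (CAB). -/
theorem range_ker_of_projections {X : Type*} [NormedAddCommGroup X]
    [NormedSpace ℂ X] [CompleteSpace X] (A B C P Q : X →L[ℂ] X)
    (hP_idem : P ∘L P = P) (hQ_idem : Q ∘L Q = Q)
    (hP_range : LinearMap.range (P : X →ₗ[ℂ] X) = LinearMap.range (B : X →ₗ[ℂ] X))
    (hQ_ker : LinearMap.ker (Q : X →ₗ[ℂ] X) = LinearMap.ker (C : X →ₗ[ℂ] X))
    (hQ_range : LinearMap.range (Q : X →ₗ[ℂ] X) = LinearMap.range (A ∘L B : X →ₗ[ℂ] X))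
    (hP_ker : LinearMap.ker (P : X →ₗ[ℂ] X) = LinearMap.ker (C ∘L A : X →ₗ[ℂ] X)) :
    LinearMap.range (C : X →ₗ[ℂ] X) = LinearMap.range (C ∘L A ∘L B : X →ₗ[ℂ] X) ∧
    LinearMap.ker (B : X →ₗ[ℂ] X) = LinearMap.ker (C ∘L A ∘L B : X →ₗ[ℂ] X) :=
  range_ker_of_projections_general A B C P Q hP_idem hQ_idem hP_range hQ_ker hQ_range hP_ker
end

section
/- Let X be a Banach space, A, B ∈ B(X), and suppose there exists a bounded projection P with ker(P) = ker(BA) = ker(B) and range(P) = range(AB) = range(B). Then X = range(AB) ⊕ ker(B) and the restriction A|range(B) : range(B) → range(AB) is bijective. -/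
open ContinuousLinearMap

namespace LinearMap

variable {R M N : Type*} [Ring R] [AddCommGroup M] [AddCommGroup N] [Module R M] [Module R N]

theorem bijOn_range_of_disjoint_range_ker_comp {A : N →ₗ[R] M} {B : M →ₗ[R] N}
    (h : Disjoint (range B) (ker (B ∘ₗ A))) :
    Set.BijOn A (Set.range B) (Set.range (A ∘ₗ B)) := by
  have hinj : Set.InjOn A (Set.range B) :=
    injOn_of_disjoint_ker (p := range B) (by rw [coe_range])
      (h.mono_right (ker_le_ker_comp A B))
  simpa only [coe_comp, Set.range_comp] using hinj.bijOn_image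

end LinearMap

theorem polar_along_operator_decomposition_general {X : Type*} [NormedAddCommGroup X]
    [NormedSpace ℂ X] (A B P : X →L[ℂ] X)
    (hP_idem : P ∘L P = P)
    (hker1 : LinearMap.ker (P : X →ₗ[ℂ] X) = LinearMap.ker ((B ∘L A : X →L[ℂ] X) : X →ₗ[ℂ] X))
    (hker2 : LinearMap.ker (P : X →ₗ[ℂ] X) = LinearMap.ker (B : X →ₗ[ℂ] X))
    (hrange1 : LinearMap.range (P : X →ₗ[ℂ] X) = LinearMap.range ((A ∘L B : X →L[ℂ] X) : X →ₗ[ℂ] X))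
    (hrange2 : LinearMap.range (P : X →ₗ[ℂ] X) = LinearMap.range (B : X →ₗ[ℂ] X)) :
    IsCompl (LinearMap.range ((A ∘L B : X →L[ℂ] X) : X →ₗ[ℂ] X)) (LinearMap.ker (B : X →ₗ[ℂ] X)) ∧
    Set.BijOn A (Set.range B) (Set.range (A ∘L B)) := by
  have hcompl : IsCompl (LinearMap.range (P : X →ₗ[ℂ] X)) (LinearMap.ker (P : X →ₗ[ℂ] X)) :=
    LinearMap.IsIdempotentElem.isCompl (congrArg toLinearMap hP_idem)
  constructor
  · rwa [hrange1, hker2] at hcompl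
  · rw [hrange2, hker1] at hcompl
    exact LinearMap.bijOn_range_of_disjoint_range_ker_comp (A := (A : X →ₗ[ℂ] X)) hcompl.disjoint

/-- If there is a bounded projection P with ker P = ker (BA) = ker B and
range P = range (AB) = range B, then X = range (AB) ⊕ ker B and the
restriction of A to range B is a bijection onto range (AB). -/
theorem polar_along_operator_decomposition {X : Type*} [NormedAddCommGroup X]
    [NormedSpace ℂ X] [CompleteSpace X] (A B P : X →L[ℂ] X)
    (hP_idem : P ∘L P = P)
    (hker1 : LinearMap.ker (P : X →ₗ[ℂ] X) = LinearMap.ker ((B ∘L A : X →L[ℂ] X) : X →ₗ[ℂ] X))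
    (hker2 : LinearMap.ker (P : X →ₗ[ℂ] X) = LinearMap.ker (B : X →ₗ[ℂ] X))
    (hrange1 : LinearMap.range (P : X →ₗ[ℂ] X) = LinearMap.range ((A ∘L B : X →L[ℂ] X) : X →ₗ[ℂ] X))
    (hrange2 : LinearMap.range (P : X →ₗ[ℂ] X) = LinearMap.range (B : X →ₗ[ℂ] X)) :
    IsCompl (LinearMap.range ((A ∘L B : X →L[ℂ] X) : X →ₗ[ℂ] X)) (LinearMap.ker (B : X →ₗ[ℂ] X)) ∧
    Set.BijOn A (Set.range B) (Set.range (A ∘L B)) :=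
  polar_along_operator_decomposition_general A B P hP_idem hker1 hker2 hrange1 hrange2
end
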